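/- arXiv:1608.01651 — 3 statements merged into one kernel-verified Lean document; each statement's English description precedes it below -/
import Mathlib

section
/- If λ ≠ 1 and u : ℝ → ℝ is a 2π-periodic solution of the cycloid equation (∗) with parameter λ, then ∫₀^{2π} u(θ)·p′(θ) dθ = (0, 0); consequently every curve γ : ℝ → ℝ × ℝ with γ′(θ) = u(θ)·p′(θ) satisfies γ(θ + 2π) = γ(θ) for all θ, i.e., the associated 𝒫-cycloid is closed. -/
open Real MeasureTheory

noncomputable section

/-- Determinant of two plane vectors: `[a, b] = a₁b₂ − a₂b₁`. -/
def det2 (a b : ℝ × ℝ) : ℝ := a.1 * b.2 - a.2 * b.1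

/-- The dual parameterization `q(θ) = p′(θ)/[p(θ), p′(θ)]`. -/
def dualQ (p : ℝ → ℝ × ℝ) : ℝ → ℝ × ℝ :=
  fun θ => (det2 (p θ) (deriv p θ))⁻¹ • deriv p θ

/-- `p` is a smooth, symmetric, quadratically convex parameterization of the
unit circle of a normed plane, by the angle its tangent makes with a fixed direction. -/
def IsUnitCircle (p : ℝ → ℝ × ℝ) : Prop :=
  ContDiff ℝ (⊤ : ℕ∞) p ∧ (∀ θ, p (θ + π) = -p θ) ∧
  (∀ θ, 0 < det2 (p θ) (deriv p θ)) ∧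
  (∀ θ, 0 < det2 (deriv p θ) (deriv (deriv p) θ))

/-- `u` is a solution of the cycloid equation
`(1/[p,p'])·(u'/[q,q'])' = −λ·u` for the normed plane with unit circle `p`. -/
def IsCycloidSol (p : ℝ → ℝ × ℝ) (lam : ℝ) (u : ℝ → ℝ) : Prop :=
  ContDiff ℝ 2 u ∧
  ∀ θ, (det2 (p θ) (deriv p θ))⁻¹ *
      deriv (fun t => deriv u t / det2 (dualQ p t) (deriv (dualQ p) t)) θ = -lam * u θ

lemma hasDerivAt_fst' {f : ℝ → ℝ × ℝ} {f' : ℝ × ℝ} {x : ℝ} (h : HasDerivAt f f' x) :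
    HasDerivAt (fun t => (f t).1) f'.1 x :=
  (ContinuousLinearMap.fst ℝ ℝ ℝ).hasFDerivAt.comp_hasDerivAt x h

lemma hasDerivAt_snd' {f : ℝ → ℝ × ℝ} {f' : ℝ × ℝ} {x : ℝ} (h : HasDerivAt f f' x) :
    HasDerivAt (fun t => (f t).2) f'.2 x :=
  (ContinuousLinearMap.snd ℝ ℝ ℝ).hasFDerivAt.comp_hasDerivAt x h

lemma det2_smul_left (x : ℝ) (u v : ℝ × ℝ) : det2 (x • u) v = x * det2 u v := by
  simp [det2]; ring

lemma det2_smul_right (x : ℝ) (u v : ℝ × ℝ) : det2 u (x • v) = x * det2 u v := by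
  simp [det2]; ring

lemma det2_swap (u v : ℝ × ℝ) : det2 u v = -det2 v u := by simp [det2]; ring

lemma det2_cramer_id (a b c : ℝ × ℝ) (h : det2 a b ≠ 0) :
    (det2 a b)⁻¹ • c + (-(det2 a c) / (det2 a b)^2) • b
      = (-(det2 b c) / (det2 a b)^2) • a := by
  have hc1 : det2 b c * a.1 = -(det2 a b * c.1) + det2 a c * b.1 := by simp [det2]; ring
  have hc2 : det2 b c * a.2 = -(det2 a b * c.2) + det2 a c * b.2 := by simp [det2]; ring
  refine Prod.ext ?_ ?_ <;>
    simp only [Prod.smul_fst, Prod.smul_snd, smul_eq_mul, Prod.fst_add, Prod.snd_add]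
  · refine mul_right_cancel₀ (pow_ne_zero 2 h) ?_
    field_simp
    linear_combination hc1
  · refine mul_right_cancel₀ (pow_ne_zero 2 h) ?_
    field_simp
    linear_combination hc2

lemma hasDerivAt_det2 {f g : ℝ → ℝ × ℝ} {f' g' : ℝ × ℝ} {x : ℝ}
    (hf : HasDerivAt f f' x) (hg : HasDerivAt g g' x) :
    HasDerivAt (fun t => det2 (f t) (g t)) (det2 f' (g x) + det2 (f x) g') x := by
  have h := (((hasDerivAt_fst' hf).mul (hasDerivAt_snd' hg)).sub
    ((hasDerivAt_snd' hf).mul (hasDerivAt_fst' hg)))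
  refine HasDerivAt.congr_deriv h ?_
  simp only [det2]; ring

/-- if `λ ≠ 1` and `u` is a `2π`-periodic solution of the cycloid
equation, then `∫₀^{2π} u·p' dθ = 0`, and hence every curve `γ` with `γ' = u·p'`
is `2π`-periodic, i.e. the associated cycloid is closed. -/
theorem stmt_4 (p : ℝ → ℝ × ℝ) (hP : IsUnitCircle p)
    (lam : ℝ) (hlam : lam ≠ 1)
    (u : ℝ → ℝ) (hu : IsCycloidSol p lam u) (hper : ∀ θ, u (θ + 2 * π) = u θ) :
    (∫ θ in (0:ℝ)..(2 * π), u θ • deriv p θ) = 0 ∧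
    ∀ γ : ℝ → ℝ × ℝ, (∀ θ, HasDerivAt γ (u θ • deriv p θ) θ) →
      ∀ θ, γ (θ + 2 * π) = γ θ := by
  obtain ⟨hp, hsym, hrpos, hDpos⟩ := hP
  obtain ⟨hu2, heq⟩ := hu
  have hp_diff : Differentiable ℝ p := hp.differentiable (by simp)
  have hp' : ContDiff ℝ (↑(⊤:ℕ∞)) p := hp.of_le (by simp)
  have hdp_cd : ContDiff ℝ (↑(⊤:ℕ∞)) (deriv p) := (contDiff_infty_iff_deriv.mp hp').2
  have hdp_diff : Differentiable ℝ (deriv p) := (contDiff_infty_iff_deriv.mp hdp_cd).1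
  have hd2p_cd : ContDiff ℝ (↑(⊤:ℕ∞)) (deriv (deriv p)) := (contDiff_infty_iff_deriv.mp hdp_cd).2
  have hd2p_diff : Differentiable ℝ (deriv (deriv p)) := (contDiff_infty_iff_deriv.mp hd2p_cd).1
  set r : ℝ → ℝ := fun θ => det2 (p θ) (deriv p θ) with hr_def
  have hr_ne : ∀ θ, r θ ≠ 0 := fun θ => ne_of_gt (hrpos θ)
  have Hp : ∀ θ, HasDerivAt p (deriv p θ) θ := fun θ => (hp_diff θ).hasDerivAt
  have Hdp : ∀ θ, HasDerivAt (deriv p) (deriv (deriv p) θ) θ := fun θ => (hdp_diff θ).hasDerivAt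
  have Hr : ∀ θ, HasDerivAt r (det2 (p θ) (deriv (deriv p) θ)) θ := by
    intro θ
    have h := hasDerivAt_det2 (Hp θ) (Hdp θ)
    convert h using 1
    simp [det2]; ring
  have Hq : ∀ θ, HasDerivAt (dualQ p)
      ((-(det2 (deriv p θ) (deriv (deriv p) θ)) / (r θ)^2) • p θ) θ := by
    intro θ
    have h := ((Hr θ).inv (hr_ne θ)).smul (Hdp θ)
    have he : dualQ p = fun t => (r t)⁻¹ • deriv p t := rfl
    rw [he]
    exact h.congr_deriv (det2_cramer_id (p θ) (deriv p θ) (deriv (deriv p) θ) (hr_ne θ))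
  have hdq : ∀ θ, deriv (dualQ p) θ
      = (-(det2 (deriv p θ) (deriv (deriv p) θ)) / (r θ)^2) • p θ := fun θ => (Hq θ).deriv
  have hs_eq : ∀ θ, det2 (dualQ p θ) (deriv (dualQ p) θ)
      = det2 (deriv p θ) (deriv (deriv p) θ) / (r θ)^2 := by
    intro θ
    rw [hdq θ]
    show det2 ((r θ)⁻¹ • deriv p θ) _ = _
    rw [det2_smul_left, det2_smul_right, det2_swap (deriv p θ) (p θ)]
    have h0 := hr_ne θ
    show (r θ)⁻¹ * (-(det2 (deriv p θ) (deriv (deriv p) θ)) / (r θ)^2 * -(r θ)) = _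
    field_simp
  have hs_pos : ∀ θ, 0 < det2 (dualQ p θ) (deriv (dualQ p) θ) := by
    intro θ
    rw [hs_eq θ]
    exact div_pos (hDpos θ) (pow_pos (hrpos θ) 2)
  have hs_ne : ∀ θ, det2 (dualQ p θ) (deriv (dualQ p) θ) ≠ 0 := fun θ => ne_of_gt (hs_pos θ)
  have hdq2 : ∀ θ, deriv (dualQ p) θ
      = (-(det2 (dualQ p θ) (deriv (dualQ p) θ))) • p θ := by
    intro θ
    rw [hs_eq θ, hdq θ, neg_div]
  -- u facts
  have hud1 : ContDiff ℝ 1 (deriv u) :=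
    (contDiff_succ_iff_deriv.mp (show ContDiff ℝ (1 + 1) u by norm_num; exact hu2)).2.2
  have hu_diff : Differentiable ℝ u := hu2.differentiable (by norm_num)
  have hdu_diff : Differentiable ℝ (deriv u) := (contDiff_one_iff_deriv.mp hud1).1
  have hdu_cont : Continuous (deriv u) := hud1.continuous
  -- continuity facts
  have cont_p : Continuous p := hp.continuous
  have cont_dp : Continuous (deriv p) := hdp_cd.continuous
  have cont_d2p : Continuous (deriv (deriv p)) := hd2p_cd.continuous
  have cont_r : Continuous r := by
    simp only [hr_def, det2]
    fun_prop
  have cont_D : Continuous (fun θ => det2 (deriv p θ) (deriv (deriv p) θ)) := by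
    simp only [det2]; fun_prop
  have cont_q : Continuous (dualQ p) := by
    have : dualQ p = fun θ => (r θ)⁻¹ • deriv p θ := rfl
    rw [this]
    exact (cont_r.inv₀ hr_ne).smul cont_dp
  have cont_dq : Continuous (deriv (dualQ p)) := by
    have : deriv (dualQ p)
        = fun θ => (-(det2 (deriv p θ) (deriv (deriv p) θ)) / (r θ)^2) • p θ := funext hdq
    rw [this]
    exact ((cont_D.neg.div (cont_r.pow 2) (fun θ => pow_ne_zero 2 (hr_ne θ))).smul cont_p)
  -- v and its derivative
  set v : ℝ → ℝ := fun t => deriv u t / det2 (dualQ p t) (deriv (dualQ p) t) with hv_def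
  have hv_eq : v = fun t => deriv u t
      / (det2 (deriv p t) (deriv (deriv p) t) / (r t)^2) := by
    funext t; rw [hv_def]; simp only; rw [hs_eq t]
  have hD_diff : Differentiable ℝ (fun θ => det2 (deriv p θ) (deriv (deriv p) θ)) := by
    simp only [det2]
    have h1 : Differentiable ℝ (fun θ => (deriv p θ).1) :=
      fun θ => (hasDerivAt_fst' (Hdp θ)).differentiableAt
    have h2 : Differentiable ℝ (fun θ => (deriv p θ).2) :=
      fun θ => (hasDerivAt_snd' (Hdp θ)).differentiableAt
    have hd3 : Differentiable ℝ (deriv (deriv p)) := (contDiff_infty_iff_deriv.mp hd2p_cd).1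
    have h3 : Differentiable ℝ (fun θ => (deriv (deriv p) θ).1) :=
      fun θ => (hasDerivAt_fst' ((hd3 θ).hasDerivAt)).differentiableAt
    have h4 : Differentiable ℝ (fun θ => (deriv (deriv p) θ).2) :=
      fun θ => (hasDerivAt_snd' ((hd3 θ).hasDerivAt)).differentiableAt
    exact (h1.mul h4).sub (h2.mul h3)
  have hr_diff : Differentiable ℝ r := fun θ => (Hr θ).differentiableAt
  have hv_diff : Differentiable ℝ v := by
    rw [hv_eq]
    exact hdu_diff.div ((hD_diff.div (hr_diff.pow 2)
      (fun θ => pow_ne_zero 2 (hr_ne θ))))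
      (fun θ => by
        have := hs_ne θ; rw [hs_eq θ] at this; exact this)
  have Hv : ∀ θ, HasDerivAt v (-lam * (r θ * u θ)) θ := by
    intro θ
    have h := (hv_diff θ).hasDerivAt
    have h2 := heq θ
    have h3 : deriv v θ = -lam * (r θ * u θ) := by
      have h0 := hr_ne θ
      field_simp at h2
      rw [div_eq_iff (hrpos θ).ne'] at h2
      rw [h2]; simp only [hr_def]; ring
    rwa [h3] at h
  have cont_v : Continuous v := by
    rw [hv_eq]
    exact hdu_cont.div (cont_D.div (cont_r.pow 2) (fun θ => pow_ne_zero 2 (hr_ne θ)))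
      (fun θ => by have := hs_ne θ; rw [hs_eq θ] at this; exact this)
  -- periodicity
  have hp_per : ∀ θ, p (θ + 2 * π) = p θ := by
    intro θ
    have h1 := hsym (θ + π)
    have h2 := hsym θ
    rw [show θ + 2 * π = θ + π + π by ring, h1, h2, neg_neg]
  have hdp_per : ∀ θ, deriv p (θ + 2 * π) = deriv p θ := by
    intro θ
    have h : (fun x => p (x + 2 * π)) = p := funext hp_per
    rw [← deriv_comp_add_const, h]
  have hd2p_per : ∀ θ, deriv (deriv p) (θ + 2 * π) = deriv (deriv p) θ := by
    intro θ
    have h : (fun x => deriv p (x + 2 * π)) = deriv p := funext hdp_per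
    rw [← deriv_comp_add_const, h]
  have hdu_per : ∀ θ, deriv u (θ + 2 * π) = deriv u θ := by
    intro θ
    have h : (fun x => u (x + 2 * π)) = u := funext hper
    rw [← deriv_comp_add_const, h]
  have hr_per : ∀ θ, r (θ + 2 * π) = r θ := by
    intro θ; simp only [hr_def]; rw [hp_per, hdp_per]
  have hq_per : ∀ θ, dualQ p (θ + 2 * π) = dualQ p θ := by
    intro θ
    show (det2 (p (θ + 2*π)) (deriv p (θ + 2*π)))⁻¹ • deriv p (θ + 2*π) = _
    rw [hp_per, hdp_per]
    rfl
  have hv_per : ∀ θ, v (θ + 2 * π) = v θ := by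
    intro θ
    rw [hv_eq]
    simp only
    rw [hdu_per, hdp_per, hd2p_per, hr_per]
  -- the key integral identity
  have key : ∀ e : (ℝ × ℝ) →L[ℝ] ℝ,
      (∫ θ in (0:ℝ)..(2 * π), u θ * e (deriv p θ)) = 0 := by
    intro e
    set A := ∫ θ in (0:ℝ)..(2 * π), u θ * e (deriv p θ) with hA
    have e_dp : ∀ θ, e (deriv p θ) = r θ * e (dualQ p θ) := by
      intro θ
      have : dualQ p θ = (r θ)⁻¹ • deriv p θ := rfl
      rw [this, _root_.map_smul, smul_eq_mul]
      rw [← mul_assoc, mul_inv_cancel₀ (hr_ne θ), one_mul]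
    have int_v' : IntervalIntegrable (fun θ => -lam * (r θ * u θ)) volume 0 (2 * π) :=
      (continuous_const.mul (cont_r.mul hu2.continuous)).intervalIntegrable _ _
    have int_eq' : IntervalIntegrable (fun θ =>
        -(det2 (dualQ p θ) (deriv (dualQ p) θ)) * e (p θ)) volume 0 (2 * π) := by
      apply Continuous.intervalIntegrable
      have cont_s : Continuous (fun θ => det2 (dualQ p θ) (deriv (dualQ p) θ)) := by
        simp only [det2]
        exact ((continuous_fst.comp cont_q).mul (continuous_snd.comp cont_dq)).sub
          ((continuous_snd.comp cont_q).mul (continuous_fst.comp cont_dq))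
      exact cont_s.neg.mul (e.continuous.comp cont_p)
    have h1 : -lam * A = ∫ θ in (0:ℝ)..(2 * π), e (dualQ p θ) * (-lam * (r θ * u θ)) := by
      rw [hA, ← intervalIntegral.integral_const_mul]
      apply intervalIntegral.integral_congr
      intro θ _
      simp only [e_dp θ]; ring
    have ibp1 := intervalIntegral.integral_mul_deriv_eq_deriv_mul
      (u := fun θ => e (dualQ p θ)) (v := v)
      (u' := fun θ => -(det2 (dualQ p θ) (deriv (dualQ p) θ)) * e (p θ))
      (v' := fun θ => -lam * (r θ * u θ)) (a := 0) (b := 2 * π)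
      (fun x _ => by
        have h := e.hasFDerivAt.comp_hasDerivAt x (Hq x)
        have h2 : e ((-(det2 (deriv p x) (deriv (deriv p) x)) / (r x)^2) • p x)
            = -(det2 (dualQ p x) (deriv (dualQ p) x)) * e (p x) := by
          rw [_root_.map_smul, smul_eq_mul, hs_eq x, neg_div]
        rwa [h2] at h)
      (fun x _ => Hv x) int_eq' int_v'
    have hbd1 : e (dualQ p (2 * π)) * v (2 * π) - e (dualQ p 0) * v 0 = 0 := by
      have h1 := hq_per 0
      have h2 := hv_per 0
      rw [zero_add] at h1 h2
      rw [h1, h2]; ring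
    have h2 : -lam * A = ∫ θ in (0:ℝ)..(2 * π), deriv u θ * e (p θ) := by
      rw [h1, ibp1, hbd1, zero_sub, ← intervalIntegral.integral_neg]
      apply intervalIntegral.integral_congr
      intro θ _
      have hs0 := hs_ne θ
      have : v θ = deriv u θ / det2 (dualQ p θ) (deriv (dualQ p) θ) := rfl
      simp only [this]
      field_simp
    have int_du : IntervalIntegrable (fun θ => deriv u θ * 0) volume 0 (2*π) := by
      simp [intervalIntegrable_const]
    have ibp2 := intervalIntegral.integral_mul_deriv_eq_deriv_mul
      (u := fun θ => e (p θ)) (v := u)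
      (u' := fun θ => e (deriv p θ)) (v' := deriv u) (a := 0) (b := 2 * π)
      (fun x _ => e.hasFDerivAt.comp_hasDerivAt x (Hp x))
      (fun x _ => (hu_diff x).hasDerivAt)
      ((e.continuous.comp cont_dp).intervalIntegrable _ _)
      (hdu_cont.intervalIntegrable _ _)
    have hbd2 : e (p (2 * π)) * u (2 * π) - e (p 0) * u 0 = 0 := by
      have h1 := hp_per 0
      have h2 := hper 0
      rw [zero_add] at h1 h2
      rw [h1, h2]; ring
    have h3 : -lam * A = -A := by
      rw [h2]
      have : (∫ θ in (0:ℝ)..(2 * π), e (p θ) * deriv u θ)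
          = ∫ θ in (0:ℝ)..(2 * π), deriv u θ * e (p θ) := by
        apply intervalIntegral.integral_congr
        intro θ _; ring
      rw [← this, ibp2, hbd2, zero_sub, hA]
      congr 1
      apply intervalIntegral.integral_congr
      intro θ _; ring
    have h4 : (lam - 1) * A = 0 := by linarith [h3]
    rcases mul_eq_zero.mp h4 with h | h
    · exact absurd (by linarith : lam = 1) hlam
    · exact h
  -- conclude the vector integral is zero
  have cont_F : Continuous (fun θ => u θ • deriv p θ) := hu2.continuous.smul cont_dp
  have int_F : IntervalIntegrable (fun θ => u θ • deriv p θ) volume 0 (2 * π) :=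
    cont_F.intervalIntegrable _ _
  have hint : (∫ θ in (0:ℝ)..(2 * π), u θ • deriv p θ) = 0 := by
    have hfst := (ContinuousLinearMap.fst ℝ ℝ ℝ).intervalIntegral_comp_comm int_F
    have hsnd := (ContinuousLinearMap.snd ℝ ℝ ℝ).intervalIntegral_comp_comm int_F
    have e1 : (fun x => (ContinuousLinearMap.fst ℝ ℝ ℝ) (u x • deriv p x))
        = fun x => u x * (ContinuousLinearMap.fst ℝ ℝ ℝ) (deriv p x) := by
      funext x; simp
    have e2 : (fun x => (ContinuousLinearMap.snd ℝ ℝ ℝ) (u x • deriv p x))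
        = fun x => u x * (ContinuousLinearMap.snd ℝ ℝ ℝ) (deriv p x) := by
      funext x; simp
    rw [e1] at hfst
    rw [e2] at hsnd
    have k1 := key (ContinuousLinearMap.fst ℝ ℝ ℝ)
    have k2 := key (ContinuousLinearMap.snd ℝ ℝ ℝ)
    refine Prod.ext ?_ ?_
    · exact hfst.symm.trans k1
    · exact hsnd.symm.trans k2
  refine ⟨hint, ?_⟩
  intro γ hγ θ
  have hFper : Function.Periodic (fun θ => u θ • deriv p θ) (2 * π) := by
    intro t; simp only [hper t, hdp_per t]
  have hftc : (∫ t in θ..(θ + 2 * π), u t • deriv p t) = γ (θ + 2 * π) - γ θ :=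
    intervalIntegral.integral_eq_sub_of_hasDerivAt (fun x _ => hγ x)
      (cont_F.intervalIntegrable _ _)
  have hper_int := hFper.intervalIntegral_add_eq θ 0
  rw [zero_add] at hper_int
  have h0 : γ (θ + 2 * π) - γ θ = 0 := by
    rw [← hftc, hper_int, hint]
  exact sub_eq_zero.mp h0
end
end

section
/- Let 0 ≤ λ < λ̄, let u be a solution of the cycloid equation (∗) with parameter λ that is not identically zero, and let ū be a solution of (∗) with parameter λ̄ that is not identically zero. Suppose θ₀ < θ₁ are consecutive zeros of u′, i.e., u′(θ₀) = u′(θ₁) = 0 and u′(θ) ≠ 0 for all θ ∈ (θ₀, θ₁), and suppose ū′(θ₀) = 0. Then there exists θ ∈ (θ₀, θ₁) with ū′(θ) = 0. -/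
open Real MeasureTheory

noncomputable section

open Topology Filter Set

/-- `det2` of two smooth curves is smooth. -/
lemma contDiff_det2 {f g : ℝ → ℝ × ℝ} (hf : ContDiff ℝ ((⊤:ℕ∞):WithTop ℕ∞) f)
    (hg : ContDiff ℝ ((⊤:ℕ∞):WithTop ℕ∞) g) :
    ContDiff ℝ ((⊤:ℕ∞):WithTop ℕ∞) (fun θ => det2 (f θ) (g θ)) :=
  (hf.fst.mul hg.snd).sub (hf.snd.mul hg.fst)

/-- The dual parameterization is smooth. -/
lemma dualQ_contDiff {p : ℝ → ℝ × ℝ} (hP : IsUnitCircle p) :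
    ContDiff ℝ ((⊤:ℕ∞):WithTop ℕ∞) (dualQ p) := by
  have hp : ContDiff ℝ ((⊤:ℕ∞):WithTop ℕ∞) p := hP.1.of_le (by simp)
  have hp' : ContDiff ℝ ((⊤:ℕ∞):WithTop ℕ∞) (deriv p) := (contDiff_infty_iff_deriv.mp hp).2
  exact ((contDiff_det2 hp hp').inv fun θ => (hP.2.2.1 θ).ne').smul hp'

/-- Positivity of `[q, q']`. -/
lemma dualQ_det_pos {p : ℝ → ℝ × ℝ} (hP : IsUnitCircle p) (θ : ℝ) :
    0 < det2 (dualQ p θ) (deriv (dualQ p) θ) := by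
  have hp : ContDiff ℝ ((⊤:ℕ∞):WithTop ℕ∞) p := hP.1.of_le (by simp)
  have hp' : ContDiff ℝ ((⊤:ℕ∞):WithTop ℕ∞) (deriv p) := (contDiff_infty_iff_deriv.mp hp).2
  have hBc : ContDiff ℝ ((⊤:ℕ∞):WithTop ℕ∞) (fun t => det2 (p t) (deriv p t)) :=
    contDiff_det2 hp hp'
  have hB := hP.2.2.1
  set B : ℝ → ℝ := fun t => det2 (p t) (deriv p t) with hBdef
  have h1 : HasDerivAt B (deriv B θ) θ := (hBc.differentiable (by simp) θ).hasDerivAt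
  have h2 : HasDerivAt (fun t => (B t)⁻¹) (-(deriv B θ) / (B θ) ^ 2) θ := h1.inv (hB θ).ne'
  have h3 : HasDerivAt (deriv p) (deriv (deriv p) θ) θ :=
    (hp'.differentiable (by simp) θ).hasDerivAt
  have h4 : HasDerivAt (dualQ p)
      ((B θ)⁻¹ • deriv (deriv p) θ + (-(deriv B θ) / (B θ) ^ 2) • deriv p θ) θ := h2.smul h3
  have h5 : deriv (dualQ p) θ
      = (B θ)⁻¹ • deriv (deriv p) θ + (-(deriv B θ) / (B θ) ^ 2) • deriv p θ := h4.deriv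
  have h6 : det2 (dualQ p θ) (deriv (dualQ p) θ)
      = det2 (deriv p θ) (deriv (deriv p) θ) / (B θ) ^ 2 := by
    rw [h5]
    show det2 ((B θ)⁻¹ • deriv p θ) _ = _
    simp only [det2, Prod.smul_fst, Prod.smul_snd, Prod.fst_add, Prod.snd_add, smul_eq_mul]
    field_simp
    linear_combination ((deriv p θ).1 * (deriv (deriv p) θ).2 - (deriv p θ).2 * (deriv (deriv p) θ).1) * (B θ)⁻¹ ^ 2 * mul_inv_cancel₀ (show B θ ≠ 0 from (hB θ).ne')
  rw [h6]
  exact div_pos (hP.2.2.2 θ) (pow_pos (hB θ) 2)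

/-- A continuous nonvanishing function on an open interval has constant sign. -/
lemma same_sign_of_ne_zero {f : ℝ → ℝ} {a b : ℝ}
    (hf : ContinuousOn f (Set.Ioo a b)) (h : ∀ x ∈ Set.Ioo a b, f x ≠ 0)
    {x y : ℝ} (hx : x ∈ Set.Ioo a b) (hy : y ∈ Set.Ioo a b) : 0 < f x * f y := by
  have key : ∀ {x y : ℝ}, x ∈ Set.Ioo a b → y ∈ Set.Ioo a b → f x < 0 → 0 < f y → False := by
    intro x y hx hy hfx hfy
    rcases lt_trichotomy x y with hxy | rfl | hxy
    · have hsub : Set.Icc x y ⊆ Set.Ioo a b :=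
        fun z hz => ⟨lt_of_lt_of_le hx.1 hz.1, lt_of_le_of_lt hz.2 hy.2⟩
      obtain ⟨c, hc, hc0⟩ := intermediate_value_Ioo hxy.le (hf.mono hsub) ⟨hfx, hfy⟩
      exact h c ⟨lt_trans hx.1 hc.1, lt_trans hc.2 hy.2⟩ hc0
    · linarith
    · have hsub : Set.Icc y x ⊆ Set.Ioo a b :=
        fun z hz => ⟨lt_of_lt_of_le hy.1 hz.1, lt_of_le_of_lt hz.2 hx.2⟩
      obtain ⟨c, hc, hc0⟩ := intermediate_value_Ioo' hxy.le (hf.mono hsub) ⟨hfx, hfy⟩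
      exact h c ⟨lt_trans hy.1 hc.1, lt_trans hc.2 hx.2⟩ hc0
  rcases lt_trichotomy (f x) 0 with h1 | h1 | h1
  · rcases lt_trichotomy (f y) 0 with h2 | h2 | h2
    · exact mul_pos_of_neg_of_neg h1 h2
    · exact absurd h2 (h y hy)
    · exact absurd (key hx hy h1 h2) not_false
  · exact absurd h1 (h x hx)
  · rcases lt_trichotomy (f y) 0 with h2 | h2 | h2
    · exact absurd (key hy hx h2 h1) not_false
    · exact absurd h2 (h y hy)
    · exact mul_pos h1 h2

/-- If `f` is nonnegative on `(a,b)`, vanishes at `b`, and is differentiable at `b`,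
then its derivative at `b` is nonpositive. -/
lemma deriv_nonpos_left {f : ℝ → ℝ} {a b d : ℝ} (hab : a < b)
    (hf : HasDerivAt f d b) (hb : f b = 0) (h : ∀ x ∈ Set.Ioo a b, 0 ≤ f x) :
    d ≤ 0 := by
  have ht : Filter.Tendsto (slope f b) (𝓝[<] b) (𝓝 d) :=
    (hasDerivAt_iff_tendsto_slope.mp hf).mono_left
      (nhdsWithin_mono b fun x hx => ne_of_lt hx)
  refine le_of_tendsto ht ?_
  filter_upwards [Ioo_mem_nhdsLT hab] with x hx
  have hs : slope f b x = f x / (x - b) := by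
    simp [slope, hb, div_eq_inv_mul]
  rw [hs]
  exact div_nonpos_of_nonneg_of_nonpos (h x hx) (by linarith [hx.2])

/-- If `g` is nonnegative on `(a,b)` and continuous at `b`, then `0 ≤ g b`. -/
lemma nonneg_left_limit {g : ℝ → ℝ} {a b : ℝ} (hab : a < b) (hg : ContinuousAt g b)
    (h : ∀ x ∈ Set.Ioo a b, 0 ≤ g x) : 0 ≤ g b := by
  have ht : Filter.Tendsto g (𝓝[<] b) (𝓝 (g b)) :=
    (hg.continuousWithinAt (s := Set.Iio b)).tendsto
  refine ge_of_tendsto ht ?_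
  filter_upwards [Ioo_mem_nhdsLT hab] with x hx using h x hx

/-- Abstract Sturm comparison argument. -/
lemma sturm_aux {A B u v : ℝ → ℝ} {lam lam' θ₀ θ₁ : ℝ}
    (hA : ∀ θ, 0 < A θ) (hAd : Differentiable ℝ A)
    (hB : ∀ θ, 0 < B θ)
    (hu : ContDiff ℝ 2 u) (hv : ContDiff ℝ 2 v)
    (hueq : ∀ θ, deriv (fun t => deriv u t / A t) θ = B θ * (-lam * u θ))
    (hveq : ∀ θ, deriv (fun t => deriv v t / A t) θ = B θ * (-lam' * v θ))
    (hlt : lam < lam') (hθ : θ₀ < θ₁)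
    (hz₀ : deriv u θ₀ = 0) (hz₁ : deriv u θ₁ = 0)
    (hcons : ∀ θ ∈ Set.Ioo θ₀ θ₁, deriv u θ ≠ 0)
    (hv₀ : deriv v θ₀ = 0)
    (hcon : ∀ θ ∈ Set.Ioo θ₀ θ₁, deriv v θ ≠ 0) : False := by
  have hAne : ∀ θ, A θ ≠ 0 := fun θ => (hA θ).ne'
  -- differentiability of u, v and their derivatives
  have hu2 : ContDiff ℝ ((1:ℕ) + 1 : WithTop ℕ∞) u := by norm_num at hu ⊢; exact hu
  have hv2 : ContDiff ℝ ((1:ℕ) + 1 : WithTop ℕ∞) v := by norm_num at hv ⊢; exact hv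
  have hud : Differentiable ℝ u := (contDiff_succ_iff_deriv.mp hu2).1
  have hvd : Differentiable ℝ v := (contDiff_succ_iff_deriv.mp hv2).1
  have hud' : Differentiable ℝ (deriv u) :=
    ((contDiff_succ_iff_deriv.mp hu2).2.2).differentiable (by simp)
  have hvd' : Differentiable ℝ (deriv v) :=
    ((contDiff_succ_iff_deriv.mp hv2).2.2).differentiable (by simp)
  set f : ℝ → ℝ := fun t => deriv u t / A t with hfdef
  set g : ℝ → ℝ := fun t => deriv v t / A t with hgdef
  have hfd : Differentiable ℝ f := hud'.div hAd hAne
  have hgd : Differentiable ℝ g := hvd'.div hAd hAne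
  have hfder : ∀ θ, HasDerivAt f (B θ * (-lam * u θ)) θ := by
    intro θ
    have h := (hfd θ).hasDerivAt
    rwa [show deriv f θ = B θ * (-lam * u θ) from by rw [hfdef]; exact hueq θ] at h
  have hgder : ∀ θ, HasDerivAt g (B θ * (-lam' * v θ)) θ := by
    intro θ
    have h := (hgd θ).hasDerivAt
    rwa [show deriv g θ = B θ * (-lam' * v θ) from by rw [hgdef]; exact hveq θ] at h
  have hu_eq : ∀ θ, deriv u θ = A θ * f θ := by
    intro θ; simp only [hfdef]
    rw [mul_comm, div_mul_cancel₀ _ (hAne θ)]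
  have hv_eq : ∀ θ, deriv v θ = A θ * g θ := by
    intro θ; simp only [hgdef]
    rw [mul_comm, div_mul_cancel₀ _ (hAne θ)]
  have hf₀ : f θ₀ = 0 := by simp [hfdef, hz₀]
  have hf₁ : f θ₁ = 0 := by simp [hfdef, hz₁]
  have hg₀ : g θ₀ = 0 := by simp [hgdef, hv₀]
  -- signs of f and g on the open interval
  have hfne : ∀ θ ∈ Set.Ioo θ₀ θ₁, f θ ≠ 0 := by
    intro θ hθ'
    simp only [hfdef]
    exact div_ne_zero (hcons θ hθ') (hAne θ)
  have hgne : ∀ θ ∈ Set.Ioo θ₀ θ₁, g θ ≠ 0 := by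
    intro θ hθ'
    simp only [hgdef]
    exact div_ne_zero (hcon θ hθ') (hAne θ)
  set m : ℝ := (θ₀ + θ₁) / 2 with hmdef
  have hm : m ∈ Set.Ioo θ₀ θ₁ := ⟨by rw [hmdef]; linarith, by rw [hmdef]; linarith⟩
  set s : ℝ := if 0 < f m then 1 else -1 with hsdef
  set t : ℝ := if 0 < g m then 1 else -1 with htdef
  have hs : ∀ θ ∈ Set.Ioo θ₀ θ₁, 0 < s * f θ := by
    intro θ hθ'
    have hp2 : 0 < f θ * f m :=
      same_sign_of_ne_zero hfd.continuous.continuousOn hfne hθ' hm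
    rw [hsdef]
    split_ifs with hc
    · nlinarith
    · have hneg : f m < 0 := lt_of_le_of_ne (not_lt.mp hc) (hfne m hm)
      nlinarith
  have ht : ∀ θ ∈ Set.Ioo θ₀ θ₁, 0 < t * g θ := by
    intro θ hθ'
    have hp2 : 0 < g θ * g m :=
      same_sign_of_ne_zero hgd.continuous.continuousOn hgne hθ' hm
    rw [htdef]
    split_ifs with hc
    · nlinarith
    · have hneg : g m < 0 := lt_of_le_of_ne (not_lt.mp hc) (hgne m hm)
      nlinarith
  -- the comparison function W
  set W : ℝ → ℝ := fun θ => s * t * (lam' * v θ * f θ - lam * u θ * g θ) with hWdef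
  have hWder : ∀ θ, HasDerivAt W (s * t * ((lam' - lam) * (A θ * f θ * g θ))) θ := by
    intro θ
    have h1 : HasDerivAt v (deriv v θ) θ := (hvd θ).hasDerivAt
    have h2 : HasDerivAt u (deriv u θ) θ := (hud θ).hasDerivAt
    have h3 := ((((h1.const_mul lam').mul (hfder θ)).sub
      ((h2.const_mul lam).mul (hgder θ))).const_mul (s * t))
    refine h3.congr_deriv ?_
    rw [hu_eq θ, hv_eq θ]
    ring
  have hWd : Differentiable ℝ W := fun θ => (hWder θ).differentiableAt
  -- W is strictly monotone on [θ₀, θ₁]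
  have hmono : StrictMonoOn W (Set.Icc θ₀ θ₁) := by
    apply strictMonoOn_of_deriv_pos (convex_Icc _ _) hWd.continuous.continuousOn
    intro x hx
    rw [interior_Icc] at hx
    rw [(hWder x).deriv]
    have h1 : 0 < s * f x := hs x hx
    have h2 : 0 < t * g x := ht x hx
    have heq : s * t * ((lam' - lam) * (A x * f x * g x))
        = ((lam' - lam) * A x) * ((s * f x) * (t * g x)) := by ring
    rw [heq]
    exact mul_pos (mul_pos (sub_pos.mpr hlt) (hA x)) (mul_pos h1 h2)
  have hW₀ : W θ₀ = 0 := by rw [hWdef]; simp [hf₀, hg₀]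
  have hWlt : W θ₀ < W θ₁ :=
    hmono ⟨le_rfl, hθ.le⟩ ⟨hθ.le, le_rfl⟩ hθ
  -- sign information at θ₁
  have hsf₁ : s * f θ₁ = 0 := by rw [hf₁]; ring
  have hsfder : HasDerivAt (fun θ => s * f θ) (s * (B θ₁ * (-lam * u θ₁))) θ₁ :=
    (hfder θ₁).const_mul s
  have hd1 : s * (B θ₁ * (-lam * u θ₁)) ≤ 0 :=
    deriv_nonpos_left hθ hsfder hsf₁ (fun x hx => (hs x hx).le)
  have hsu : 0 ≤ lam * (s * u θ₁) := by nlinarith [hB θ₁]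
  have htg : 0 ≤ t * g θ₁ := by
    refine nonneg_left_limit (g := fun x => t * g x) hθ ?_ (fun x hx => (ht x hx).le)
    exact ((hgd θ₁).continuousAt.const_mul t)
  have hW₁ : W θ₁ = -((lam * (s * u θ₁)) * (t * g θ₁)) := by
    rw [hWdef]
    simp only [hf₁]
    ring
  have : W θ₁ ≤ 0 := by
    rw [hW₁]
    exact neg_nonpos_of_nonneg (mul_nonneg hsu htg)
  linarith

/-- Sturm comparison: if `0 ≤ λ < λ̄`, `u` solves the cycloid equation
with parameter `λ`, `ū` solves it with parameter `λ̄`, both nonzero, `θ₀ < θ₁` are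
consecutive zeros of `u'`, and `ū'(θ₀) = 0`, then `ū'` vanishes in `(θ₀, θ₁)`. -/
theorem stmt_7 (p : ℝ → ℝ × ℝ) (hP : IsUnitCircle p)
    (lam lam' : ℝ) (hlam : 0 ≤ lam) (hlt : lam < lam')
    (u v : ℝ → ℝ) (hu : IsCycloidSol p lam u) (hv : IsCycloidSol p lam' v)
    (hu0 : u ≠ 0) (hv0 : v ≠ 0)
    (θ₀ θ₁ : ℝ) (hθ : θ₀ < θ₁)
    (hz₀ : deriv u θ₀ = 0) (hz₁ : deriv u θ₁ = 0)
    (hcons : ∀ θ ∈ Set.Ioo θ₀ θ₁, deriv u θ ≠ 0)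
    (hv' : deriv v θ₀ = 0) :
    ∃ θ ∈ Set.Ioo θ₀ θ₁, deriv v θ = 0 := by
  by_contra hcon
  push_neg at hcon
  have hq : ContDiff ℝ ((⊤:ℕ∞):WithTop ℕ∞) (dualQ p) := dualQ_contDiff hP
  have hq' : ContDiff ℝ ((⊤:ℕ∞):WithTop ℕ∞) (deriv (dualQ p)) :=
    (contDiff_infty_iff_deriv.mp hq).2
  have hAc : ContDiff ℝ ((⊤:ℕ∞):WithTop ℕ∞)
      (fun t => det2 (dualQ p t) (deriv (dualQ p) t)) := contDiff_det2 hq hq'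
  have hAd : Differentiable ℝ (fun t => det2 (dualQ p t) (deriv (dualQ p) t)) :=
    hAc.differentiable (by simp)
  have hA : ∀ θ, 0 < det2 (dualQ p θ) (deriv (dualQ p) θ) := dualQ_det_pos hP
  have hB : ∀ θ, 0 < det2 (p θ) (deriv p θ) := hP.2.2.1
  have hueq : ∀ θ, deriv (fun t => deriv u t / det2 (dualQ p t) (deriv (dualQ p) t)) θ
      = det2 (p θ) (deriv p θ) * (-lam * u θ) := by
    intro θ
    have h := hu.2 θ
    rw [← h, mul_inv_cancel_left₀ (hB θ).ne']
  have hveq : ∀ θ, deriv (fun t => deriv v t / det2 (dualQ p t) (deriv (dualQ p) t)) θ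
      = det2 (p θ) (deriv p θ) * (-lam' * v θ) := by
    intro θ
    have h := hv.2 θ
    rw [← h, mul_inv_cancel_left₀ (hB θ).ne']
  exact sturm_aux hA hAd hB hu.1 hv.1 hueq hveq hlt hθ hz₀ hz₁ hcons hv' hcon
end
end

section
/- If u is a solution of the cycloid equation (∗) with parameter λ = 1 and u is not identically zero, then ∫₀^{2π} u(θ)·p′(θ) dθ ≠ (0, 0); consequently no curve γ : ℝ → ℝ × ℝ with γ′(θ) = u(θ)·p′(θ) satisfies γ(θ₀ + 2π) = γ(θ₀), i.e., the Minkowskian cycloids corresponding to λ = 1 are not closed. -/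
open Real MeasureTheory

noncomputable section

lemma det2_self (a : ℝ × ℝ) : det2 a a = 0 := by simp [det2, mul_comm]
lemma det2_comm (a b : ℝ × ℝ) : det2 a b = -det2 b a := by simp [det2]; ring
lemma det2_zero_left (b : ℝ × ℝ) : det2 0 b = 0 := by simp [det2]
lemma det2_zero_right (a : ℝ × ℝ) : det2 a 0 = 0 := by simp [det2]
lemma det2_smul_left_s13 (c : ℝ) (a b : ℝ × ℝ) : det2 (c • a) b = c * det2 a b := by
  simp [det2]; ring
lemma det2_smul_right_s13 (c : ℝ) (a b : ℝ × ℝ) : det2 a (c • b) = c * det2 a b := by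
  simp [det2]; ring
lemma det2_add_left (a b c : ℝ × ℝ) : det2 (a + b) c = det2 a c + det2 b c := by
  simp [det2]; ring
lemma det2_add_right (a b c : ℝ × ℝ) : det2 a (b + c) = det2 a b + det2 a c := by
  simp [det2]; ring
lemma det2_cramer (a b c : ℝ × ℝ) : det2 a b • c = det2 c b • a + det2 a c • b := by
  apply Prod.ext <;> simp [det2] <;> ring
lemma det2_forces (a b c : ℝ × ℝ) (hab : det2 a b ≠ 0) (h1 : det2 a c = 0)
    (h2 : det2 b c = 0) : c = 0 := by
  have h := det2_cramer a b c
  rw [h1, det2_comm c b, h2, neg_zero, zero_smul, zero_smul, add_zero] at h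
  rcases smul_eq_zero.mp h with h | h
  · exact absurd h hab
  · exact h
lemma HasDerivAt.det2' {f g : ℝ → ℝ × ℝ} {f' g' : ℝ × ℝ} {θ : ℝ}
    (hf : HasDerivAt f f' θ) (hg : HasDerivAt g g' θ) :
    HasDerivAt (fun t => det2 (f t) (g t)) (det2 f' (g θ) + det2 (f θ) g') θ := by
  have h1 : HasDerivAt (fun t => (f t).1) f'.1 θ := hf.fst
  have h2 : HasDerivAt (fun t => (f t).2) f'.2 θ := hf.snd
  have h3 : HasDerivAt (fun t => (g t).1) g'.1 θ := hg.fst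
  have h4 : HasDerivAt (fun t => (g t).2) g'.2 θ := hg.snd
  have := (h1.mul h4).sub (h2.mul h3)
  unfold det2
  exact this.congr_deriv (by ring)

/-- a nonzero solution `u` of the cycloid equation with `λ = 1` has
`∫₀^{2π} u·p' dθ ≠ 0`, so no curve `γ` with `γ' = u·p'` closes up after one period:
Minkowskian cycloids (`λ = 1`) are never closed. -/
theorem stmt_13 (p : ℝ → ℝ × ℝ) (hP : IsUnitCircle p)
    (u : ℝ → ℝ) (hu : IsCycloidSol p 1 u) (hu0 : u ≠ 0) :
    (∫ θ in (0:ℝ)..(2 * π), u θ • deriv p θ) ≠ 0 ∧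
    ∀ γ : ℝ → ℝ × ℝ, (∀ θ, HasDerivAt γ (u θ • deriv p θ) θ) →
      ∀ θ₀, γ (θ₀ + 2 * π) ≠ γ θ₀ := by
  obtain ⟨hsm, hsym, hrpos, hconv⟩ := hP
  obtain ⟨husm, hode⟩ := hu
  -- differentiability of p and u
  have hsm' : ContDiff ℝ ((⊤ : ℕ∞) : WithTop ℕ∞) p := hsm.of_le (by simp)
  have h1 := contDiff_infty_iff_deriv.mp hsm'
  have hpd : Differentiable ℝ p := h1.1
  have h2 := contDiff_infty_iff_deriv.mp h1.2
  have hpd1 : Differentiable ℝ (deriv p) := h2.1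
  have hpd2 : Differentiable ℝ (deriv (deriv p)) := (contDiff_infty_iff_deriv.mp h2.2).1
  have hud : Differentiable ℝ u := husm.differentiable (by norm_num)
  have hud1 : Differentiable ℝ (deriv u) := by
    have h2' : ContDiff ℝ ((1 + 1 : ℕ) : WithTop ℕ∞) u := by exact_mod_cast husm
    have h3 : ContDiff ℝ 1 (deriv u) := by simpa using ContDiff.iterate_deriv' 1 1 h2'
    exact h3.differentiable (by norm_num)
  have hrne : ∀ θ, det2 (p θ) (deriv p θ) ≠ 0 := fun θ => ne_of_gt (hrpos θ)
  -- derivative of r = [p, p']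
  have hr : ∀ θ, HasDerivAt (fun t => det2 (p t) (deriv p t))
      (det2 (p θ) (deriv (deriv p) θ)) θ := by
    intro θ
    have := ((hpd θ).hasDerivAt).det2' ((hpd1 θ).hasDerivAt)
    simpa [det2_self] using this
  -- derivative of q = dualQ p
  have hq' : ∀ θ, HasDerivAt (dualQ p)
      ((det2 (p θ) (deriv p θ))⁻¹ • deriv (deriv p) θ
        + (-(det2 (p θ) (deriv (deriv p) θ)) / (det2 (p θ) (deriv p θ)) ^ 2) • deriv p θ) θ := by
    intro θ
    exact ((hr θ).inv (hrne θ)).smul ((hpd1 θ).hasDerivAt)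
  have hqd : ∀ θ, deriv (dualQ p) θ
      = (det2 (p θ) (deriv p θ))⁻¹ • deriv (deriv p) θ
        + (-(det2 (p θ) (deriv (deriv p) θ)) / (det2 (p θ) (deriv p θ)) ^ 2) • deriv p θ :=
    fun θ => (hq' θ).deriv
  -- s = [q, q'] = [p', p'']/r² > 0
  have hs_eq : ∀ θ, det2 (dualQ p θ) (deriv (dualQ p) θ)
      = det2 (deriv p θ) (deriv (deriv p) θ) / (det2 (p θ) (deriv p θ)) ^ 2 := by
    intro θ
    rw [hqd θ]
    simp only [dualQ, det2_add_right, det2_smul_left_s13, det2_smul_right_s13, det2_self]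
    field_simp
    have h0 := hrne θ
    linear_combination (det2 (deriv p θ) (deriv (deriv p) θ) * (det2 (p θ) (deriv p θ))⁻¹ ^ 2) * (mul_inv_cancel₀ h0)
  have hspos : ∀ θ, 0 < det2 (dualQ p θ) (deriv (dualQ p) θ) := by
    intro θ
    rw [hs_eq θ]
    exact div_pos (hconv θ) (pow_pos (hrpos θ) 2)
  have hsne : ∀ θ, det2 (dualQ p θ) (deriv (dualQ p) θ) ≠ 0 := fun θ => ne_of_gt (hspos θ)
  -- [p, q] = 1
  have hpq : ∀ θ, det2 (p θ) (dualQ p θ) = 1 := by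
    intro θ
    simp only [dualQ, det2_smul_right_s13]
    exact inv_mul_cancel₀ (hrne θ)
  -- [p, q'] = 0
  have hpq' : ∀ θ, det2 (p θ) (deriv (dualQ p) θ) = 0 := by
    intro θ
    rw [hqd θ]
    simp only [det2_add_right, det2_smul_right_s13]
    have h0 := hrne θ
    field_simp
    ring
  -- q' = -s • p
  have hqp : ∀ θ, deriv (dualQ p) θ
      = (-(det2 (dualQ p θ) (deriv (dualQ p) θ))) • p θ := by
    intro θ
    have h := det2_cramer (p θ) (dualQ p θ) (deriv (dualQ p) θ)
    rw [hpq θ, hpq' θ, one_smul, zero_smul, add_zero] at h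
    have h2 : det2 (deriv (dualQ p) θ) (dualQ p θ)
        = -(det2 (dualQ p θ) (deriv (dualQ p) θ)) := by rw [det2_comm]
    rw [h2] at h
    exact h
  -- p' = r • q
  have hp'q : ∀ θ, deriv p θ = (det2 (p θ) (deriv p θ)) • dualQ p θ := by
    intro θ
    rw [dualQ, smul_smul, mul_inv_cancel₀ (hrne θ), one_smul]
  -- the function v = u' / s and its derivative
  have hvd : ∀ θ, HasDerivAt
      (fun t => deriv u t / det2 (dualQ p t) (deriv (dualQ p) t))
      (-(det2 (p θ) (deriv p θ) * u θ)) θ := by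
    intro θ
    have hsd : DifferentiableAt ℝ (fun t => det2 (dualQ p t) (deriv (dualQ p) t)) θ := by
      have heq : (fun t => det2 (dualQ p t) (deriv (dualQ p) t))
          = fun t => det2 (deriv p t) (deriv (deriv p) t) / (det2 (p t) (deriv p t)) ^ 2 :=
        funext hs_eq
      rw [heq]
      have hnum : DifferentiableAt ℝ (fun t => det2 (deriv p t) (deriv (deriv p) t)) θ :=
        ((hpd1 θ).hasDerivAt.det2' (hpd2 θ).hasDerivAt).differentiableAt
      have hden : DifferentiableAt ℝ (fun t => det2 (p t) (deriv p t)) θ :=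
        (hr θ).differentiableAt
      exact hnum.div (hden.pow 2) (pow_ne_zero 2 (hrne θ))
    have hdiff : DifferentiableAt ℝ
        (fun t => deriv u t / det2 (dualQ p t) (deriv (dualQ p) t)) θ :=
      (hud1 θ).div hsd (hsne θ)
    have h := hdiff.hasDerivAt
    have he := hode θ
    have hval : deriv (fun t => deriv u t / det2 (dualQ p t) (deriv (dualQ p) t)) θ
        = -(det2 (p θ) (deriv p θ) * u θ) := by
      have hr0 := hrne θ
      field_simp at he
      linarith [he]
    rwa [hval] at h
  -- the first integral F = u • p + v • q is constant
  have hF : ∀ θ, HasDerivAt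
      (fun t => u t • p t
        + (deriv u t / det2 (dualQ p t) (deriv (dualQ p) t)) • dualQ p t) 0 θ := by
    intro θ
    have ha := ((hud θ).hasDerivAt.smul (hpd θ).hasDerivAt)
    have hb := (hvd θ).smul (hq' θ)
    have hc := ha.add hb
    refine hc.congr_deriv ?_
    symm
    rw [← hqd θ]
    have h6 := hp'q θ
    have h7 := hqp θ
    have hS0 := hsne θ
    set S := det2 (dualQ p θ) (deriv (dualQ p) θ) with hS
    set R := det2 (p θ) (deriv p θ) with hR
    rw [h7, h6]
    match_scalars <;> (try ring) <;> field_simp <;> simp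
  -- F is constant, call its value k
  have hFd : Differentiable ℝ (fun t => u t • p t
      + (deriv u t / det2 (dualQ p t) (deriv (dualQ p) t)) • dualQ p t) :=
    fun θ => (hF θ).differentiableAt
  have hFc : ∀ θ : ℝ, (fun t => u t • p t
      + (deriv u t / det2 (dualQ p t) (deriv (dualQ p) t)) • dualQ p t) θ
      = (fun t => u t • p t
      + (deriv u t / det2 (dualQ p t) (deriv (dualQ p) t)) • dualQ p t) 0 :=
    fun θ => is_const_of_deriv_eq_zero hFd (fun t => (hF t).deriv) θ 0
  set k : ℝ × ℝ := u 0 • p 0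
      + (deriv u 0 / det2 (dualQ p 0) (deriv (dualQ p) 0)) • dualQ p 0 with hkdef
  have hFk : ∀ θ, u θ • p θ
      + (deriv u θ / det2 (dualQ p θ) (deriv (dualQ p) θ)) • dualQ p θ = k :=
    fun θ => hFc θ
  -- u θ = [k, q θ]
  have hu_eq : ∀ θ, u θ = det2 k (dualQ p θ) := by
    intro θ
    rw [← hFk θ, det2_add_left, det2_smul_left_s13, det2_smul_left_s13, det2_self, hpq θ]
    ring
  -- k ≠ 0
  have hk : k ≠ 0 := by
    intro h0
    apply hu0
    funext θ
    rw [hu_eq θ, h0, det2_zero_left]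
    rfl
  -- periodicity
  have hperp : Function.Periodic p (2 * π) := by
    intro θ
    have ha := hsym (θ + π)
    rw [show θ + π + π = θ + 2 * π by ring] at ha
    rw [ha, hsym θ, neg_neg]
  have hperp' : Function.Periodic (deriv p) (2 * π) := by
    intro θ
    have : (fun x => p (x + 2 * π)) = p := funext hperp
    rw [← deriv_comp_add_const p (2 * π), this]
  have hperq : Function.Periodic (dualQ p) (2 * π) := by
    intro θ
    simp only [dualQ, hperp θ, hperp' θ]
  have hperu : Function.Periodic u (2 * π) := by
    intro θ
    rw [hu_eq, hu_eq, hperq θ]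
  have hperf : Function.Periodic (fun θ => u θ • deriv p θ) (2 * π) := by
    intro θ
    simp only [hperu θ, hperp' θ]
  -- continuity
  have hcf : Continuous (fun θ => u θ • deriv p θ) :=
    hud.continuous.smul hpd1.continuous
  -- the key integral computation
  let L : (ℝ × ℝ) →L[ℝ] ℝ :=
    k.1 • (ContinuousLinearMap.snd ℝ ℝ ℝ) - k.2 • (ContinuousLinearMap.fst ℝ ℝ ℝ)
  have hL : ∀ x : ℝ × ℝ, L x = det2 k x := by
    intro x
    show k.1 * x.2 - k.2 * x.1 = k.1 * x.2 - k.2 * x.1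
    rfl
  have hI : det2 k (∫ θ in (0:ℝ)..(2 * π), u θ • deriv p θ)
      = ∫ θ in (0:ℝ)..(2 * π), det2 (p θ) (deriv p θ) * u θ ^ 2 := by
    rw [← hL, ← L.intervalIntegral_comp_comm (hcf.intervalIntegrable _ _)]
    apply intervalIntegral.integral_congr
    intro θ _
    have : L (u θ • deriv p θ) = det2 (p θ) (deriv p θ) * u θ ^ 2 := by
      rw [hL, det2_smul_right_s13]
      nth_rewrite 1 [hp'q θ]
      rw [det2_smul_right_s13, ← hu_eq θ]
      ring
    simpa using this
  -- u is not identically zero on [0, 2π]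
  have hex : ∃ c ∈ Set.Icc (0:ℝ) (2 * π), u c ≠ 0 := by
    by_contra hcon
    push_neg at hcon
    have hπmem : π ∈ Set.Icc (0:ℝ) (2 * π) := ⟨le_of_lt pi_pos, by linarith [pi_pos]⟩
    have huπ : u π = 0 := hcon π hπmem
    have hz : u =ᶠ[nhds π] (fun _ => 0) := by
      have hmem : Set.Ioo (0:ℝ) (2 * π) ∈ nhds π :=
        Ioo_mem_nhds pi_pos (by linarith [pi_pos])
      filter_upwards [hmem] with t ht
      exact hcon t ⟨le_of_lt ht.1, le_of_lt ht.2⟩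
    have hu'π : deriv u π = 0 := by
      rw [Filter.EventuallyEq.deriv_eq hz]
      simp
    -- deriv u π = det2 k (deriv (dualQ p) π)
    have hdu : deriv u π = det2 k (deriv (dualQ p) π) := by
      have hueq : u = fun t => det2 k (dualQ p t) := funext hu_eq
      have hder : HasDerivAt (fun t => det2 k (dualQ p t))
          (det2 k (deriv (dualQ p) π)) π := by
        have := (hasDerivAt_const π k).det2' (hq' π)
        rw [← hqd π] at this
        simpa [det2_zero_left] using this
      rw [hueq]
      exact hder.deriv
    have hkq : det2 k (dualQ p π) = 0 := by rw [← hu_eq π]; exact huπ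
    have hkp : det2 k (p π) = 0 := by
      have h3 : det2 k (deriv (dualQ p) π) = 0 := by rw [← hdu]; exact hu'π
      rw [hqp π, det2_smul_right_s13] at h3
      rcases mul_eq_zero.mp h3 with h4 | h4
      · exact absurd (neg_eq_zero.mp h4) (hsne π)
      · exact h4
    have : k = 0 := by
      apply det2_forces (p π) (dualQ p π) k (by rw [hpq π]; norm_num)
      · rw [det2_comm]
        rw [hkp]
        ring
      · rw [det2_comm]
        rw [hkq]
        ring
    exact hk this
  -- positivity of ∫ r u²
  have hcr : Continuous (fun θ => det2 (p θ) (deriv p θ) * u θ ^ 2) := by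
    have hc1 : Continuous (fun θ => det2 (p θ) (deriv p θ)) := by
      unfold det2
      exact ((hpd.continuous.fst.mul hpd1.continuous.snd).sub
        (hpd.continuous.snd.mul hpd1.continuous.fst))
    exact hc1.mul ((hud.continuous).pow 2)
  have hpos : 0 < ∫ θ in (0:ℝ)..(2 * π), det2 (p θ) (deriv p θ) * u θ ^ 2 := by
    obtain ⟨c, hcmem, hc0⟩ := hex
    apply intervalIntegral.integral_pos (by positivity)
      (hcr.continuousOn)
      (fun x _ => mul_nonneg (hrpos x).le (sq_nonneg _))
    refine ⟨c, hcmem, ?_⟩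
    have h5 : 0 < u c ^ 2 := pow_two_pos_of_ne_zero hc0
    exact mul_pos (hrpos c) h5
  -- conclusion part 1
  have hIne : (∫ θ in (0:ℝ)..(2 * π), u θ • deriv p θ) ≠ 0 := by
    intro h0
    rw [h0, det2_zero_right] at hI
    rw [← hI] at hpos
    exact lt_irrefl 0 hpos
  refine ⟨hIne, ?_⟩
  intro γ hγ θ₀ hclosed
  have hFTC : ∫ θ in θ₀..(θ₀ + 2 * π), u θ • deriv p θ = γ (θ₀ + 2 * π) - γ θ₀ :=
    intervalIntegral.integral_eq_sub_of_hasDerivAt (fun t _ => hγ t)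
      (hcf.intervalIntegrable _ _)
  have hshift := hperf.intervalIntegral_add_eq θ₀ 0
  rw [zero_add] at hshift
  rw [hshift, hclosed, sub_self] at hFTC
  exact hIne hFTC
end
end
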